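/- Let Q ∈ ℂ^{n×n} be Hermitian positive semidefinite with eigenvalues λ₁ ≥ λ₂ ≥ … ≥ λ_n and let σ > 0 and m ≤ n. Then for any A ∈ ℂ^{m×n} with A Aᴴ = I_m, det(I_m + σ⁻² A Q Aᴴ) ≤ ∏_{i=1}^{m} (1 + σ⁻² λ_i), and this bound is attained when the rows of A are orthonormal eigenvectors of Q corresponding to the m largest eigenvalues. -/

import Mathlib

open Matrix
open scoped ComplexOrder


lemma fin_strictMono_le {m n : ℕ} {f : Fin m → Fin n} (hf : StrictMono f) :
    ∀ i : Fin m, (i : ℕ) ≤ (f i : ℕ) := by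
  rintro ⟨k, hk⟩
  induction k with
  | zero => exact Nat.zero_le _
  | succ k ih =>
      have h1 : (⟨k, Nat.lt_of_succ_lt hk⟩ : Fin m) < ⟨k + 1, hk⟩ := by
        simp [Fin.lt_def]
      have h2 : ((f ⟨k, Nat.lt_of_succ_lt hk⟩ : Fin n) : ℕ) < (f ⟨k + 1, hk⟩ : ℕ) :=
        Fin.lt_def.mp (hf h1)
      have h3 := ih (Nat.lt_of_succ_lt hk)
      simp only [Fin.val_mk] at h2 h3 ⊢
      omega

lemma prod_le_sorted {m n : ℕ} (hmn : m ≤ n) (dd : Fin n → ℝ)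
    (h0 : ∀ j, 0 ≤ dd j) (hmono : Antitone dd) {f : Fin m → Fin n}
    (hf : Function.Injective f) :
    ∏ i : Fin m, dd (f i) ≤ ∏ i : Fin m, dd (Fin.castLE hmn i) := by
  classical
  set s : Finset (Fin n) := Finset.image f Finset.univ with hs
  have hcard : s.card = m := by
    rw [hs, Finset.card_image_of_injective _ hf, Finset.card_univ, Fintype.card_fin]
  set t := s.orderEmbOfFin hcard with ht
  have himg : Finset.image (⇑t) Finset.univ = s := by
    ext j
    simp only [Finset.mem_image, Finset.mem_univ, true_and]
    constructor
    · rintro ⟨i, rfl⟩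
      have : t i ∈ Set.range ⇑t := ⟨i, rfl⟩
      rwa [Finset.range_orderEmbOfFin, Finset.mem_coe] at this
    · intro hj
      have : j ∈ Set.range ⇑t := by rw [Finset.range_orderEmbOfFin]; exact hj
      exact this
  have e1 : ∏ i : Fin m, dd (f i) = ∏ j ∈ s, dd j := by
    rw [hs, Finset.prod_image (fun x _ y _ h => hf h)]
  have e2 : ∏ j ∈ s, dd j = ∏ i : Fin m, dd (t i) := by
    rw [← himg, Finset.prod_image (fun x _ y _ h => t.injective h)]
  rw [e1, e2]
  refine Finset.prod_le_prod (fun i _ => h0 _) (fun i _ => ?_)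
  refine hmono ?_
  rw [Fin.le_def]
  simpa using fin_strictMono_le t.strictMono i


lemma det_expand {m n : ℕ} (C : Matrix (Fin m) (Fin n) ℂ) (d : Fin n → ℂ) :
    (C * diagonal d * Cᴴ).det
      = ∑ g : Fin m → Fin n, (∏ i, C i (g i) * d (g i)) * (Cᴴ.submatrix g id).det := by
  have h : C * diagonal d * Cᴴ = Matrix.of (fun i => ∑ j, (C i j * d j) • Cᴴ j) := by
    ext i k
    rw [Matrix.mul_apply]
    simp only [Matrix.mul_diagonal, Matrix.of_apply, Finset.sum_apply, Pi.smul_apply,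
      smul_eq_mul, Matrix.conjTranspose_apply, mul_assoc]
  rw [h]
  have h1 := MultilinearMap.map_sum
    ((Matrix.detRowAlternating : (Fin m → ℂ) [⋀^Fin m]→ₗ[ℂ] ℂ).toMultilinearMap)
    (g := fun i j => (C i j * d j) • Cᴴ j)
  have h2 : (Matrix.of fun i => ∑ j, (C i j * d j) • Cᴴ j).det
      = ∑ r : Fin m → Fin n,
          (Matrix.detRowAlternating : (Fin m → ℂ) [⋀^Fin m]→ₗ[ℂ] ℂ)
            (fun i => (C i (r i) * d (r i)) • Cᴴ (r i)) := h1
  rw [h2]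
  refine Finset.sum_congr rfl fun g _ => ?_
  have h3 := MultilinearMap.map_smul_univ
    ((Matrix.detRowAlternating : (Fin m → ℂ) [⋀^Fin m]→ₗ[ℂ] ℂ).toMultilinearMap)
    (fun i => C i (g i) * d (g i)) (fun i => Cᴴ (g i))
  rw [show (Cᴴ.submatrix g id).det = Matrix.detRowAlternating fun i => Cᴴ (g i) from rfl]
  simpa [smul_eq_mul] using h3

lemma det_master {m n : ℕ} (C : Matrix (Fin m) (Fin n) ℂ) (d : Fin n → ℂ) :
    (m.factorial : ℂ) * (C * diagonal d * Cᴴ).det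
      = ∑ g : Fin m → Fin n,
          (∏ i, d (g i)) * ((C.submatrix id g).det * star (C.submatrix id g).det) := by
  classical
  set F : (Fin m → Fin n) → ℂ :=
    fun g => (∏ i, C i (g i) * d (g i)) * (Cᴴ.submatrix g id).det with hF
  have reidx : ∀ σ : Equiv.Perm (Fin m), ∑ g : Fin m → Fin n, F (g ∘ σ) = ∑ g, F g := by
    intro σ
    have hbij : Function.Bijective (fun g : Fin m → Fin n => g ∘ σ) := by
      constructor
      · intro a b h
        funext i
        simpa using congrFun h (σ.symm i)
      · intro g
        exact ⟨g ∘ ⇑σ.symm, by funext i; simp⟩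
    exact Fintype.sum_bijective _ hbij (fun g => F (g ∘ σ)) F (fun g => rfl)
  have step1 : (m.factorial : ℂ) * (C * diagonal d * Cᴴ).det
      = ∑ g : Fin m → Fin n, ∑ σ : Equiv.Perm (Fin m), F (g ∘ σ) := by
    rw [det_expand, ← hF]
    rw [Finset.sum_comm]
    have : ∀ σ ∈ (Finset.univ : Finset (Equiv.Perm (Fin m))),
        ∑ g : Fin m → Fin n, F (g ∘ σ) = ∑ g, F g := fun σ _ => reidx σ
    rw [Finset.sum_congr rfl this, Finset.sum_const, Finset.card_univ, Fintype.card_perm,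
      Fintype.card_fin, nsmul_eq_mul]
  rw [step1]
  refine Finset.sum_congr rfl fun g _ => ?_
  -- inner sum over σ
  have hsub : ∀ σ : Equiv.Perm (Fin m),
      Cᴴ.submatrix (g ∘ σ) id = (Cᴴ.submatrix g id).submatrix ⇑σ id := by
    intro σ; rw [Matrix.submatrix_submatrix]; rfl
  have hdet2 : (Cᴴ.submatrix g id).det = star (C.submatrix id g).det := by
    rw [← Matrix.conjTranspose_submatrix, Matrix.det_conjTranspose]
  calc ∑ σ : Equiv.Perm (Fin m), F (g ∘ σ)
      = ∑ σ : Equiv.Perm (Fin m),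
          ((Equiv.Perm.sign σ : ℤ) : ℂ) * (∏ i, C i (g (σ i)))
            * ((∏ i, d (g i)) * star (C.submatrix id g).det) := by
        refine Finset.sum_congr rfl fun σ _ => ?_
        rw [hF]
        simp only [Function.comp_apply]
        rw [Finset.prod_mul_distrib, hsub σ, Matrix.det_permute, hdet2,
          Equiv.prod_comp σ (fun j => d (g j))]
        ring
    _ = (∑ σ : Equiv.Perm (Fin m), ((Equiv.Perm.sign σ : ℤ) : ℂ) * ∏ i, C i (g (σ i)))
          * ((∏ i, d (g i)) * star (C.submatrix id g).det) := by
        rw [← Finset.sum_mul]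
    _ = (∏ i, d (g i)) * ((C.submatrix id g).det * star (C.submatrix id g).det) := by
        have : ∑ σ : Equiv.Perm (Fin m), ((Equiv.Perm.sign σ : ℤ) : ℂ) * ∏ i, C i (g (σ i))
            = (C.submatrix id g).det := by
          rw [← Matrix.det_transpose (C.submatrix id g), Matrix.det_apply']
          exact Finset.sum_congr rfl fun σ _ => by
            simp [Matrix.transpose_apply, Matrix.submatrix_apply]
        rw [this]; ring

lemma key_ineq {m n : ℕ} (C : Matrix (Fin m) (Fin n) ℂ) (hC : C * Cᴴ = 1)
    (d : Fin n → ℝ) (M : ℝ)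
    (hd : ∀ g : Fin m → Fin n, Function.Injective g → ∏ i, d (g i) ≤ M) :
    ((C * diagonal (fun j => (d j : ℂ)) * Cᴴ).det).re ≤ M := by
  classical
  set z : (Fin m → Fin n) → ℂ := fun g => (C.submatrix id g).det with hz
  have hmaster := det_master C (fun j => (d j : ℂ))
  have hre : (m.factorial : ℝ) * ((C * diagonal (fun j => (d j : ℂ)) * Cᴴ).det).re
      = ∑ g : Fin m → Fin n, (∏ i, d (g i)) * Complex.normSq (z g) := by
    have := congrArg Complex.re hmaster
    have hrw : ∀ g : Fin m → Fin n,
        (∏ i, ((d (g i) : ℝ) : ℂ)) * (z g * star (z g))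
          = (((∏ i, d (g i)) * Complex.normSq (z g) : ℝ) : ℂ) := by
      intro g
      rw [← Complex.ofReal_prod]
      rw [show star (z g) = (starRingEnd ℂ) (z g) from rfl, Complex.mul_conj]
      push_cast
      ring
    rw [Finset.sum_congr rfl fun g _ => hrw g] at this
    rw [← Complex.ofReal_sum] at this
    simp only [Complex.ofReal_re, Complex.mul_re, Complex.natCast_re, Complex.natCast_im,
      Complex.ofReal_im, zero_mul, sub_zero] at this
    exact_mod_cast this
  have hone : (m.factorial : ℝ) = ∑ g : Fin m → Fin n, Complex.normSq (z g) := by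
    have := congrArg Complex.re (det_master C (fun _ => ((1 : ℝ) : ℂ)))
    simp only [Complex.ofReal_one, Matrix.diagonal_one, Matrix.mul_one, hC,
      Matrix.det_one, mul_one, Finset.prod_const_one, one_mul] at this
    have hrw : ∀ g : Fin m → Fin n,
        z g * star (z g) = ((Complex.normSq (z g) : ℝ) : ℂ) := fun g => by
      rw [show star (z g) = (starRingEnd ℂ) (z g) from rfl, Complex.mul_conj]
    rw [Finset.sum_congr rfl fun g _ => hrw g, ← Complex.ofReal_sum] at this
    simpa using this
  have hbound : ∑ g : Fin m → Fin n, (∏ i, d (g i)) * Complex.normSq (z g)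
      ≤ ∑ g : Fin m → Fin n, M * Complex.normSq (z g) := by
    refine Finset.sum_le_sum fun g _ => ?_
    by_cases hg : Function.Injective g
    · exact mul_le_mul_of_nonneg_right (hd g hg) (Complex.normSq_nonneg _)
    · have : z g = 0 := by
        rw [Function.not_injective_iff] at hg
        obtain ⟨a, b, hab, hne⟩ := hg
        exact Matrix.det_zero_of_column_eq hne (fun k => by
          simp [Matrix.submatrix_apply, hab])
      simp [this]
  have hfac : (0 : ℝ) < (m.factorial : ℝ) := by exact_mod_cast Nat.factorial_pos m
  have : (m.factorial : ℝ) * ((C * diagonal (fun j => (d j : ℂ)) * Cᴴ).det).re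
      ≤ (m.factorial : ℝ) * M := by
    rw [hre]
    calc ∑ g : Fin m → Fin n, (∏ i, d (g i)) * Complex.normSq (z g)
        ≤ ∑ g : Fin m → Fin n, M * Complex.normSq (z g) := hbound
      _ = M * ∑ g : Fin m → Fin n, Complex.normSq (z g) := by rw [Finset.mul_sum]
      _ = (m.factorial : ℝ) * M := by rw [← hone]; ring
  exact le_of_mul_le_mul_left this hfac

/-- Proposition 3: let `Q : ℂ^{n×n}` be Hermitian positive semidefinite with eigenvalues
`λ₁ ≥ … ≥ λ_n` (given by an antitone enumeration `lam` of the eigenvalues of `Q`),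
`σ > 0` and `m ≤ n`.  Then for every semi-unitary `A : ℂ^{m×n}` (`A Aᴴ = I`),
`det (I + σ⁻² A Q Aᴴ) ≤ ∏_{i<m} (1 + σ⁻² λᵢ)` (the determinant is real since the matrix
is Hermitian; we compare its real part), and the bound is attained by some semi-unitary
matrix whose rows are orthonormal eigenvectors of `Q` for the `m` largest eigenvalues. -/
theorem adaptive_sensing_matrix_optimal
    {n m : ℕ} (hmn : m ≤ n) (Q : Matrix (Fin n) (Fin n) ℂ) (hQ : Q.PosSemidef)
    (lam : Fin n → ℝ) (hlam_mono : Antitone lam)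
    (hlam : ∃ e : Equiv.Perm (Fin n), ∀ i, lam i = hQ.isHermitian.eigenvalues (e i))
    (σ : ℝ) (hσ : 0 < σ) :
    (∀ A : Matrix (Fin m) (Fin n) ℂ, A * Aᴴ = 1 →
      (((1 : Matrix (Fin m) (Fin m) ℂ) + ((σ ^ 2)⁻¹ : ℝ) • (A * Q * Aᴴ)).det).re
        ≤ ∏ i : Fin m, (1 + (σ ^ 2)⁻¹ * lam (Fin.castLE hmn i))) ∧
    (∃ A : Matrix (Fin m) (Fin n) ℂ, A * Aᴴ = 1 ∧
      (∀ i : Fin m, Q.mulVec (star (A i)) = (lam (Fin.castLE hmn i) : ℂ) • star (A i)) ∧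
      (((1 : Matrix (Fin m) (Fin m) ℂ) + ((σ ^ 2)⁻¹ : ℝ) • (A * Q * Aᴴ)).det).re
        = ∏ i : Fin m, (1 + (σ ^ 2)⁻¹ * lam (Fin.castLE hmn i))) := by
  classical
  obtain ⟨e, he⟩ := hlam
  set c : ℝ := (σ ^ 2)⁻¹ with hc
  have hc0 : 0 ≤ c := by positivity
  set ev : Fin n → ℝ := hQ.isHermitian.eigenvalues with hev
  have hev0 : ∀ j, 0 ≤ ev j := hQ.eigenvalues_nonneg
  have hlam0 : ∀ j, 0 ≤ lam j := fun j => (he j) ▸ hev0 (e j)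
  have hevlam : ∀ j, ev j = lam (e.symm j) := fun j => by
    rw [he (e.symm j), Equiv.apply_symm_apply]
  set U : Matrix (Fin n) (Fin n) ℂ := ↑(hQ.isHermitian.eigenvectorUnitary) with hU'
  have hU : U * Uᴴ = 1 := by
    have h := (Matrix.mem_unitaryGroup_iff).mp (hQ.isHermitian.eigenvectorUnitary).2
    rwa [Matrix.star_eq_conjTranspose] at h
  have hspec : Q = U * diagonal (fun j => (ev j : ℂ)) * Uᴴ := by
    have h := hQ.isHermitian.spectral_theorem
    rw [Unitary.conjStarAlgAut_apply, Matrix.star_eq_conjTranspose] at h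
    exact h
  -- the bound
  set Mb : ℝ := ∏ i : Fin m, (1 + c * lam (Fin.castLE hmn i)) with hMb
  set dd : Fin n → ℝ := fun j => 1 + c * lam j with hdd
  have hdd0 : ∀ j, 0 ≤ dd j := fun j => by
    have := hlam0 j; dsimp [dd]; nlinarith
  have hddmono : Antitone dd := fun a b hab => by
    dsimp [dd]
    have := hlam_mono hab
    nlinarith
  constructor
  · intro A hA
    set C : Matrix (Fin m) (Fin n) ℂ := A * U with hCdef
    have hC : C * Cᴴ = 1 := by
      have h1 : C * Cᴴ = A * (U * Uᴴ) * Aᴴ := by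
        rw [hCdef, Matrix.conjTranspose_mul]
        simp only [Matrix.mul_assoc]
      rw [h1, hU, Matrix.mul_one, hA]
    have hCD : C * diagonal (fun j => (ev j : ℂ)) * Cᴴ = A * Q * Aᴴ := by
      rw [hspec, hCdef, Matrix.conjTranspose_mul]
      simp only [Matrix.mul_assoc]
    have hdiag : diagonal (fun j => ((1 + c * ev j : ℝ) : ℂ))
        = (1 : Matrix (Fin n) (Fin n) ℂ) + c • diagonal (fun j => (ev j : ℂ)) := by
      ext i j
      by_cases h : i = j
      · subst h
        simp [Matrix.diagonal_apply_eq, Matrix.one_apply_eq, Complex.real_smul]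
      · simp [Matrix.diagonal_apply_ne _ h, Matrix.one_apply_ne h, h]
    have hmat : (1 : Matrix (Fin m) (Fin m) ℂ) + c • (A * Q * Aᴴ)
        = C * diagonal (fun j => ((1 + c * ev j : ℝ) : ℂ)) * Cᴴ := by
      rw [hdiag]
      rw [Matrix.mul_add, Matrix.mul_one, Matrix.add_mul, Matrix.mul_smul, Matrix.smul_mul,
        hC, hCD]
    rw [hmat]
    refine key_ineq C hC (fun j => 1 + c * ev j) Mb ?_
    intro g hg
    have h1 : ∀ i : Fin m, 1 + c * ev (g i) = dd (e.symm (g i)) := fun i => by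
      rw [hdd]; dsimp only; rw [hevlam]
    rw [Finset.prod_congr rfl fun i _ => h1 i]
    exact prod_le_sorted hmn dd hdd0 hddmono (e.symm.injective.comp hg)
  · -- attainment
    set f : Fin m → Fin n := fun i => e (Fin.castLE hmn i) with hf
    have hfinj : Function.Injective f := fun a b h => by
      have := e.injective h
      exact Fin.castLE_injective hmn this
    set b := hQ.isHermitian.eigenvectorBasis with hb
    set A : Matrix (Fin m) (Fin n) ℂ := Matrix.of fun i j => star (b (f i) j) with hAdef
    have hstar : ∀ i, star (A i) = ⇑(b (f i)) := fun i => funext fun j => star_star _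
    have heig : ∀ i : Fin m,
        Q.mulVec (star (A i)) = (lam (Fin.castLE hmn i) : ℂ) • star (A i) := by
      intro i
      rw [hstar i, hQ.isHermitian.mulVec_eigenvectorBasis (f i)]
      have hl : lam (Fin.castLE hmn i) = ev (f i) := he _
      rw [hl]
      funext j
      simp [Complex.real_smul]
      rfl
    have hAA : A * Aᴴ = 1 := by
      ext i k
      have horth := orthonormal_iff_ite.mp b.orthonormal (f i) (f k)
      rw [PiLp.inner_apply] at horth
      simp only [RCLike.inner_apply] at horth
      rw [Matrix.mul_apply, Matrix.one_apply]
      have hlhs : ∑ j, A i j * Aᴴ j k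
          = ∑ j, (starRingEnd ℂ) (b (f i) j) * (b (f k) j) := by
        refine Finset.sum_congr rfl fun j _ => ?_
        simp [hAdef, Matrix.conjTranspose_apply]
      rw [hlhs, show (∑ j, (starRingEnd ℂ) (b (f i) j) * (b (f k) j))
          = ∑ j, (b (f k) j) * (starRingEnd ℂ) (b (f i) j) from
          Finset.sum_congr rfl fun j _ => mul_comm _ _, horth]
      simp [hfinj.eq_iff]
    refine ⟨A, hAA, heig, ?_⟩
    have hrow : ∀ i : Fin m, A i ᵥ* Q = (lam (Fin.castLE hmn i) : ℂ) • A i := by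
      intro i
      have h1 := congrArg star (heig i)
      rw [Matrix.star_mulVec] at h1
      rw [star_star, hQ.isHermitian.eq] at h1
      rw [h1, star_smul, star_star]
      simp [Complex.star_def, Complex.conj_ofReal]
    have hdiagQ : A * Q * Aᴴ = diagonal (fun i => (lam (Fin.castLE hmn i) : ℂ)) := by
      have hAQ : A * Q = Matrix.of fun i j => (lam (Fin.castLE hmn i) : ℂ) * A i j := by
        ext i j
        have h2 := congrFun (hrow i) j
        simpa [Matrix.vecMul, dotProduct, Matrix.mul_apply] using h2
      ext i k
      rw [Matrix.mul_apply]
      simp only [hAQ, Matrix.of_apply]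
      rw [show ∑ j, (lam (Fin.castLE hmn i) : ℂ) * A i j * Aᴴ j k
            = (lam (Fin.castLE hmn i) : ℂ) * ∑ j, A i j * Aᴴ j k by
          rw [Finset.mul_sum]; exact Finset.sum_congr rfl fun j _ => by ring]
      rw [← Matrix.mul_apply, hAA]
      by_cases h : i = k
      · subst h; simp
      · simp [Matrix.one_apply_ne h, Matrix.diagonal_apply_ne _ h]
    rw [hdiagQ]
    have hfinal : (1 : Matrix (Fin m) (Fin m) ℂ)
          + c • diagonal (fun i => (lam (Fin.castLE hmn i) : ℂ))
        = diagonal (fun i => ((1 + c * lam (Fin.castLE hmn i) : ℝ) : ℂ)) := by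
      ext i j
      by_cases h : i = j
      · subst h
        simp [Matrix.diagonal_apply_eq, Matrix.one_apply_eq, Complex.real_smul]
      · simp [Matrix.diagonal_apply_ne _ h, Matrix.one_apply_ne h, h]
    rw [hfinal, Matrix.det_diagonal, ← Complex.ofReal_prod, Complex.ofReal_re]
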